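/- arXiv:1110.4723 — 2 statements merged into one kernel-verified Lean document; each statement's English description precedes it below -/
import Mathlib

section
/- In a live-path graph with fixed negative seed set N₀, the influence blocking set is monotone: for any set S and any vertex u ∉ S ∪ N₀, IBS(S) ⊆ IBS(S ∪ {u}). -/
variable {V : Type*}

/-- There is a walk of length `n` (number of edges) from `u` to `w` along relation `E`. -/
inductive PathLen (E : V → V → Prop) : V → V → ℕ → Prop
  | refl (v : V) : PathLen E v v 0
  | tail {u v w : V} {n : ℕ} : PathLen E u v n → E v w → PathLen E u w (n + 1)

/-- Shortest-path distance (number of edges) from the set `S` to `v` along edges `E`,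
`⊤` if no path exists. -/
noncomputable def eDist (E : V → V → Prop) (S : Set V) (v : V) : ℕ∞ :=
  sInf {n : ℕ∞ | ∃ m : ℕ, n = (m : ℕ∞) ∧ ∃ s ∈ S, PathLen E s v m}

/-- An edge relation is "live-path" if every vertex has at most one in-edge. -/
def LivePathRel (E : V → V → Prop) : Prop :=
  ∀ ⦃u u' v : V⦄, E u v → E u' v → u = u'

/-- `l` is a path (list of successive vertices) along `E` from `s` to `v`. -/
def IsPathFrom (E : V → V → Prop) (l : List V) (s v : V) : Prop :=
  l.Chain' E ∧ l.head? = some s ∧ l.getLast? = some v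

/-- `l` is a shortest path along `E` from the set `S` to `v`:
it starts at some node of `S`, ends at `v`, and its number of edges equals `eDist E S v`. -/
def IsShortestPath (E : V → V → Prop) (S : Set V) (v : V) (l : List V) : Prop :=
  (∃ s ∈ S, IsPathFrom E l s v) ∧ (l.length : ℕ∞) = eDist E S v + 1

/-- `v` is negatively activated (-active) under positive seeds `S` and negative seeds `N₀`. -/
def NegActive (pos neg : V → V → Prop) (N₀ S : Set V) (v : V) : Prop :=
  eDist neg N₀ v < ⊤ ∧ eDist neg N₀ v ≤ eDist pos S v

/-- Influence blocking set: vertices -active with empty positive seed set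
but not -active with positive seed set `S`. -/
def IBS (pos neg : V → V → Prop) (N₀ S : Set V) : Set V :=
  {v | NegActive pos neg N₀ ∅ v ∧ ¬ NegActive pos neg N₀ S v}

lemma eDist_anti (E : V → V → Prop) {S T : Set V} (hST : S ⊆ T) (v : V) :
    eDist E T v ≤ eDist E S v :=
  sInf_le_sInf fun _ ⟨m, hm, s, hs, hp⟩ => ⟨m, hm, s, hST hs, hp⟩

lemma NegActive.of_superset {pos neg : V → V → Prop} {N₀ S T : Set V} {v : V} (hST : S ⊆ T)
    (h : NegActive pos neg N₀ T v) : NegActive pos neg N₀ S v :=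
  ⟨h.1, h.2.trans (eDist_anti pos hST v)⟩

lemma IBS_mono (pos neg : V → V → Prop) (N₀ : Set V) {S T : Set V} (hST : S ⊆ T) :
    IBS pos neg N₀ S ⊆ IBS pos neg N₀ T :=
  fun _ ⟨hEmpty, hS⟩ => ⟨hEmpty, fun hT => hS (hT.of_superset hST)⟩

theorem stmt4_general (pos neg : V → V → Prop)
    (N₀ S : Set V) (u : V) :
    IBS pos neg N₀ S ⊆ IBS pos neg N₀ (S ∪ {u}) :=
  IBS_mono pos neg N₀ Set.subset_union_left

/-- Monotonicity of the influence blocking set: for `u ∉ S ∪ N₀`,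
`IBS(S) ⊆ IBS(S ∪ {u})`. -/
theorem stmt4 (pos neg : V → V → Prop)
    (hpos : LivePathRel pos) (hneg : LivePathRel neg)
    (N₀ S : Set V) (u : V) (hu : u ∉ S ∪ N₀) :
    IBS pos neg N₀ S ⊆ IBS pos neg N₀ (S ∪ {u}) :=
  stmt4_general pos neg N₀ S u
end

section
/- Let f : 2^V → ℝ≥0 be monotone, submodular, and satisfy f(∅) = 0. Then the greedy algorithm that iteratively adds the element of maximal marginal gain for k steps produces a set S_k with f(S_k) ≥ (1 − (1 − 1/k)^k) · max_{|T| ≤ k} f(T) ≥ (1 − 1/e) · max_{|T| ≤ k} f(T). -/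
/-!
Fix `T` with `#T ≤ k` and let `Sᵢ` be the greedy sets. By submodularity, `f (Sᵢ ∪ T) - f Sᵢ` is at
most the sum of the `#T ≤ k` single-element gains over `Sᵢ`, each at most the greedy gain, so the
greedy step closes at least a `1/k` fraction of the gap `f T - f Sᵢ`. After `k` steps the gap is
at most `(1 - 1/k)^k f T ≤ f T / e`.
-/

open Finset

def IsSubmodular {α : Type*} [DecidableEq α] (f : Finset α → ℝ) : Prop :=
  ∀ S T : Finset α, S ⊆ T → ∀ x ∉ T, f (insert x T) - f T ≤ f (insert x S) - f S

def IsGreedyRun {α : Type*} [DecidableEq α] (f : Finset α → ℝ) (S : ℕ → Finset α) (k : ℕ) :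
    Prop :=
  ∀ i < k, ∃ v ∉ S i, S (i + 1) = insert v (S i) ∧
    ∀ w : α, f (insert w (S i)) ≤ f (insert v (S i))

section Greedy

variable {α : Type*} [DecidableEq α] {f : Finset α → ℝ}

theorem IsSubmodular.sub_le_sum_marginal (hf : IsSubmodular f) (A T : Finset α) :
    f (A ∪ T) - f A ≤ ∑ x ∈ T, (f (insert x A) - f A) := by
  induction T using Finset.induction_on with
  | empty => simp
  | insert a T ha ih =>
    rw [sum_insert ha, union_insert]
    by_cases haA : a ∈ A
    · rw [insert_eq_of_mem (mem_union_left T haA), insert_eq_of_mem haA]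
      linarith
    · have := hf A (A ∪ T) subset_union_left a (by simp [haA, ha])
      linarith

theorem IsSubmodular.sub_le_card_mul_of_forall_le (hf : IsSubmodular f) (hmono : Monotone f)
    {A B : Finset α} (hB : ∀ w, f (insert w A) ≤ f B) (T : Finset α) :
    f T - f A ≤ #T * (f B - f A) :=
  calc f T - f A ≤ f (A ∪ T) - f A := by gcongr; exact hmono subset_union_right
    _ ≤ ∑ x ∈ T, (f (insert x A) - f A) := hf.sub_le_sum_marginal A T
    _ ≤ ∑ _x ∈ T, (f B - f A) := sum_le_sum fun x _ => by linarith [hB x]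
    _ = #T * (f B - f A) := by rw [sum_const, nsmul_eq_mul]

theorem IsSubmodular.sub_insert_le_mul_sub (hf : IsSubmodular f) (hmono : Monotone f)
    {A T : Finset α} {v : α} (hv : ∀ w, f (insert w A) ≤ f (insert v A)) {k : ℕ}
    (hT : #T ≤ k) :
    f T - f (insert v A) ≤ (1 - 1 / k) * (f T - f A) := by
  have hgain : 0 ≤ f (insert v A) - f A := sub_nonneg.2 (hmono (subset_insert v A))
  have hgap : f T - f A ≤ k * (f (insert v A) - f A) :=
    (hf.sub_le_card_mul_of_forall_le hmono hv T).trans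
      (mul_le_mul_of_nonneg_right (by exact_mod_cast hT) hgain)
  have : (f T - f A) / k ≤ f (insert v A) - f A :=
    div_le_of_le_mul₀ k.cast_nonneg hgain (by linarith)
  linarith [show (1 - 1 / (k : ℝ)) * (f T - f A) = f T - f A - (f T - f A) / k by ring]

theorem IsGreedyRun.sub_le_pow_mul (hf : IsSubmodular f) (hmono : Monotone f)
    {S : ℕ → Finset α} {k : ℕ} (hS : IsGreedyRun f S k) {T : Finset α} (hT : #T ≤ k) :
    ∀ i ≤ k, f T - f (S i) ≤ (1 - 1 / k) ^ i * (f T - f (S 0)) := by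
  have hc : (0 : ℝ) ≤ 1 - 1 / k := sub_nonneg.2 (one_div (k : ℝ) ▸ Nat.cast_inv_le_one k)
  intro i hi
  induction i with
  | zero => simp
  | succ i ih =>
    obtain ⟨v, -, hSv, hv⟩ := hS i hi
    calc f T - f (S (i + 1)) ≤ (1 - 1 / k) * (f T - f (S i)) :=
          hSv ▸ hf.sub_insert_le_mul_sub hmono hv hT
      _ ≤ (1 - 1 / k) * ((1 - 1 / k) ^ i * (f T - f (S 0))) :=
          mul_le_mul_of_nonneg_left (ih (by omega)) hc
      _ = (1 - 1 / k) ^ (i + 1) * (f T - f (S 0)) := by ring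

end Greedy

theorem stmt9_general {V : Type*} [DecidableEq V]
    (f : Finset V → ℝ) (k : ℕ) (hk : 1 ≤ k)
    (hnonneg : ∀ S : Finset V, 0 ≤ f S)
    (hmono : ∀ S T : Finset V, S ⊆ T → f S ≤ f T)
    (hsub : ∀ S T : Finset V, S ⊆ T → ∀ x ∉ T,
      f (insert x T) - f T ≤ f (insert x S) - f S)
    (hempty : f ∅ = 0)
    (S : ℕ → Finset V) (hS0 : S 0 = ∅)
    (hgreedy : ∀ i < k, ∃ v ∉ S i, S (i + 1) = insert v (S i) ∧
      ∀ w : V, f (insert w (S i)) ≤ f (insert v (S i))) :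
    ∀ T : Finset V, T.card ≤ k →
      (1 - (1 - 1 / (k : ℝ)) ^ k) * f T ≤ f (S k) ∧
      (1 - 1 / Real.exp 1) * f T ≤ (1 - (1 - 1 / (k : ℝ)) ^ k) * f T := by
  intro T hT
  have hgap := IsGreedyRun.sub_le_pow_mul (f := f) hsub (fun _ _ h => hmono _ _ h) hgreedy hT
    k le_rfl
  rw [hS0, hempty, sub_zero] at hgap
  have hpow : (1 - 1 / (k : ℝ)) ^ k ≤ 1 / Real.exp 1 := by
    rw [one_div (Real.exp 1), ← Real.exp_neg]
    exact Real.one_sub_div_pow_le_exp_neg (by exact_mod_cast hk)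
  exact ⟨by linarith, mul_le_mul_of_nonneg_right (by linarith) (hnonneg T)⟩

/-- The greedy algorithm for a nonnegative monotone submodular set function with
`f ∅ = 0` achieves a `1 - (1 - 1/k)^k ≥ 1 - 1/e` approximation of the optimum over
sets of size at most `k`. -/
theorem stmt9 {V : Type*} [Fintype V] [DecidableEq V]
    (f : Finset V → ℝ) (k : ℕ) (hk : 1 ≤ k)
    (hnonneg : ∀ S : Finset V, 0 ≤ f S)
    (hmono : ∀ S T : Finset V, S ⊆ T → f S ≤ f T)
    (hsub : ∀ S T : Finset V, S ⊆ T → ∀ x ∉ T,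
      f (insert x T) - f T ≤ f (insert x S) - f S)
    (hempty : f ∅ = 0)
    (S : ℕ → Finset V) (hS0 : S 0 = ∅)
    (hgreedy : ∀ i < k, ∃ v ∉ S i, S (i + 1) = insert v (S i) ∧
      ∀ w : V, f (insert w (S i)) ≤ f (insert v (S i))) :
    ∀ T : Finset V, T.card ≤ k →
      (1 - (1 - 1 / (k : ℝ)) ^ k) * f T ≤ f (S k) ∧
      (1 - 1 / Real.exp 1) * f T ≤ (1 - (1 - 1 / (k : ℝ)) ^ k) * f T :=
  stmt9_general f k hk hnonneg hmono hsub hempty S hS0 hgreedy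
end
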